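/- arXiv:2304.00540 — 6 statements merged into one kernel-verified Lean document; each statement's English description precedes it below -/
import Mathlib

section
/- For any odd integer p and even integer q with 0 < |q| < p and gcd(p,q) = 1, the rational number p/q has a continued fraction expansion [2a_1, 2a_2, ..., 2a_{2n}] consisting of only nonzero even integers, where the number of partial quotients is even. -/
/-- Value of a continued fraction `[a₁, …, aₙ] = a₁ + 1/(a₂ + 1/(⋯ + 1/aₙ))`,
evaluated in `ℚ` (with the convention `cfVal [] = 0`, so `cfVal [a] = a`). -/
def cfVal : List ℤ → ℚ
  | [] => 0
  | a :: l => a + (cfVal l)⁻¹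

/-!
Run the Euclidean algorithm with even quotients: since `p` and `q` have opposite parities, `p`
is never an odd multiple of `q`, so `p = a q + r` with `a` even and `|r| < |q|`. Starting from
`p` odd and `q` even, two such steps `p = a q + r`, `q = b r + s` lead to `r` odd and `s` even
again, with `a, b ≠ 0` because the absolute values strictly decrease. The algorithm stops when
`s = 0`, after an even number of steps.
-/

def IsEvenExpansion (l : List ℤ) : Prop :=
  (∀ a ∈ l, a ≠ 0 ∧ Even a) ∧ Even l.length

theorem isEvenExpansion_nil : IsEvenExpansion [] := by
  simp [IsEvenExpansion]

theorem IsEvenExpansion.cons_cons {a b : ℤ} {l : List ℤ} (ha : a ≠ 0 ∧ Even a)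
    (hb : b ≠ 0 ∧ Even b) (hl : IsEvenExpansion l) : IsEvenExpansion (a :: b :: l) := by
  obtain ⟨hmem, hlen⟩ := hl
  refine ⟨?_, by simpa [Nat.even_add_one] using hlen⟩
  simp only [List.mem_cons, forall_eq_or_imp]
  exact ⟨ha, hb, hmem⟩

theorem cfVal_cons_eq_div {a : ℤ} {l : List ℤ} {p q r : ℚ} (hl : cfVal l = q / r)
    (hp : p = a * q + r) (hq : q ≠ 0) : cfVal (a :: l) = p / q := by
  rw [cfVal, hl, inv_div, hp]
  field_simp

theorem exists_even_mul_add_of_odd_add {p q : ℤ} (hq : q ≠ 0) (hpq : Odd (p + q)) :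
    ∃ a r : ℤ, Even a ∧ p = a * q + r ∧ |r| < |q| := by
  have hq2 : 2 * q ≠ 0 := mul_ne_zero two_ne_zero hq
  set m := p / (2 * q)
  set t := p % (2 * q)
  have hdiv : p = 2 * q * m + t := (Int.mul_ediv_add_emod p (2 * q)).symm
  have ht0 : 0 ≤ t := Int.emod_nonneg p hq2
  have ht : t < 2 * |q| := by simpa [abs_mul] using Int.emod_lt p hq2
  have hsign : q.sign * q = |q| := Int.sign_mul_self_eq_abs q
  obtain ⟨k, hk⟩ : Odd q.sign := Int.odd_sign_iff.mpr hq
  -- `t = |q|` would make `p` an odd multiple `(2m + sign q) q` of `q`, and `p + q` even.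
  have hne : t ≠ |q| := by
    rintro htq
    apply Int.not_even_iff_odd.mpr hpq
    exact ⟨q * (m + k + 1), by linear_combination hdiv + htq - hsign + q * hk⟩
  rcases lt_or_gt_of_ne hne with hlt | hgt
  · exact ⟨2 * m, t, even_two_mul m, by linear_combination hdiv, by rwa [abs_of_nonneg ht0]⟩
  · refine ⟨2 * (m + q.sign), t - 2 * |q|, even_two_mul _, ?_, ?_⟩
    · linear_combination hdiv - 2 * hsign
    · rw [abs_of_neg (by linarith)]
      linarith

theorem exists_isEvenExpansion_cfVal_eq_div {p q : ℤ} (hp : Odd p) (hq : Even q) (hq0 : q ≠ 0)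
    (hqp : |q| < |p|) : ∃ l, IsEvenExpansion l ∧ cfVal l = (p : ℚ) / q := by
  obtain ⟨a, r, ha, hpar, hrq⟩ := exists_even_mul_add_of_odd_add hq0 (hp.add_even hq)
  have hr : Odd r := by simpa [hpar] using hp.sub_even (hq.mul_left a)
  have hr0 : r ≠ 0 := by rintro rfl; simp at hr
  obtain ⟨b, s, hb, hqbr, hsr⟩ := exists_even_mul_add_of_odd_add hr0 (hq.add_odd hr)
  have hs : Even s := by simpa [hqbr] using hq.sub (hb.mul_right r)
  have ha0 : a ≠ 0 := by rintro rfl; rw [hpar, zero_mul, zero_add] at hqp; linarith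
  have hb0 : b ≠ 0 := by rintro rfl; rw [hqbr, zero_mul, zero_add] at hrq; linarith
  obtain ⟨l, hl, hval⟩ : ∃ l, IsEvenExpansion l ∧ cfVal l = (r : ℚ) / s := by
    by_cases hs0 : s = 0
    -- the algorithm has ended; `cfVal [] = 0 = r / 0` makes the last step `q = b r` fit the pattern
    · exact ⟨[], isEvenExpansion_nil, by simp [cfVal, hs0]⟩
    · exact exists_isEvenExpansion_cfVal_eq_div hr hs hs0 hsr
  refine ⟨a :: b :: l, hl.cons_cons ⟨ha0, ha⟩ ⟨hb0, hb⟩, ?_⟩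
  have hbl : cfVal (b :: l) = (q : ℚ) / r :=
    cfVal_cons_eq_div hval (by exact_mod_cast hqbr) (by exact_mod_cast hr0)
  exact cfVal_cons_eq_div hbl (by exact_mod_cast hpar) (by exact_mod_cast hq0)
termination_by q.natAbs
decreasing_by
  rw [Int.abs_eq_natAbs, Int.abs_eq_natAbs] at hsr hrq
  omega

theorem even_expansion_exists_general (p q : ℤ) (hp : Odd p) (hq : Even q)
    (h0 : 0 < |q|) (h1 : |q| < p) :
    ∃ l : List ℤ, (∀ a ∈ l, a ≠ 0 ∧ Even a) ∧ Even l.length ∧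
      cfVal l = (p : ℚ) / q := by
  obtain ⟨l, ⟨hmem, hlen⟩, hval⟩ :=
    exists_isEvenExpansion_cfVal_eq_div hp hq (abs_pos.mp h0) (h1.trans_le (le_abs_self p))
  exact ⟨l, hmem, hlen, hval⟩

/-- Even expansion exists: any p/q with p odd, q even, 0 < |q| < p, gcd = 1 has a
continued fraction expansion with all entries nonzero even integers, of even length. -/
theorem even_expansion_exists (p q : ℤ) (hp : Odd p) (hq : Even q)
    (h0 : 0 < |q|) (h1 : |q| < p) (hco : IsCoprime p q) :
    ∃ l : List ℤ, (∀ a ∈ l, a ≠ 0 ∧ Even a) ∧ Even l.length ∧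
      cfVal l = (p : ℚ) / q :=
  even_expansion_exists_general p q hp hq h0 h1
end

section
/- For any odd integer p and even integer q with 0 < |q| < p and gcd(p,q) = 1, the continued fraction expansion of p/q consisting of only nonzero even integers is unique. -/
lemma Int.two_le_abs_of_even {a : ℤ} (ha : Even a) (h0 : a ≠ 0) : 2 ≤ |a| := by
  obtain ⟨k, rfl⟩ := ha
  rcases abs_cases (k + k) with ⟨h, _⟩ | ⟨h, _⟩ <;> omega

lemma Int.eq_of_even_of_abs_sub_lt_two {a b : ℤ} (ha : Even a) (hb : Even b)
    (h : |a - b| < 2) : a = b := by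
  obtain ⟨j, rfl⟩ := ha
  obtain ⟨k, rfl⟩ := hb
  rcases abs_cases (j + j - (k + k)) with ⟨h', _⟩ | ⟨h', _⟩ <;> omega

lemma one_lt_abs_cfVal_cons {a : ℤ} {m : List ℤ} (ha : 2 ≤ |a|) (hm : |(cfVal m)⁻¹| < 1) :
    1 < |cfVal (a :: m)| := by
  have ha' : (2 : ℚ) ≤ |(a : ℚ)| := mod_cast ha
  calc 1 < |(a : ℚ)| - |(cfVal m)⁻¹| := by linarith
    _ ≤ |(a : ℚ) + (cfVal m)⁻¹| := by
      simpa using abs_sub_abs_le_abs_sub (a : ℚ) (-(cfVal m)⁻¹)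

lemma abs_inv_cfVal_lt_one {l : List ℤ} (hl : ∀ a ∈ l, 2 ≤ |a|) : |(cfVal l)⁻¹| < 1 := by
  induction l with
  | nil => simp [cfVal]
  | cons a m ih =>
    have h := one_lt_abs_cfVal_cons (hl a List.mem_cons_self)
      (ih fun b hb => hl b (List.mem_cons_of_mem a hb))
    rw [abs_inv, inv_lt_one_iff₀]
    exact Or.inr h

lemma cfVal_cons_ne_zero {a : ℤ} {m : List ℤ} (hl : ∀ c ∈ a :: m, 2 ≤ |c|) :
    cfVal (a :: m) ≠ 0 := by
  intro h
  have := one_lt_abs_cfVal_cons (hl a List.mem_cons_self)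
    (abs_inv_cfVal_lt_one fun c hc => hl c (List.mem_cons_of_mem a hc))
  rw [h, abs_zero] at this
  exact absurd this zero_le_one.not_gt

lemma eq_and_cfVal_eq_of_cfVal_cons_eq {a b : ℤ} {m n : List ℤ} (ha : Even a) (hb : Even b)
    (hm : ∀ c ∈ m, 2 ≤ |c|) (hn : ∀ c ∈ n, 2 ≤ |c|) (h : cfVal (a :: m) = cfVal (b :: n)) :
    a = b ∧ cfVal m = cfVal n := by
  have hm' := abs_inv_cfVal_lt_one hm
  have hn' := abs_inv_cfVal_lt_one hn
  have hdiff : ((a - b : ℤ) : ℚ) = (cfVal n)⁻¹ - (cfVal m)⁻¹ := by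
    simp only [cfVal] at h
    push_cast
    linarith
  have hab : a = b := by
    refine Int.eq_of_even_of_abs_sub_lt_two ha hb ?_
    have : |((a - b : ℤ) : ℚ)| < 2 := by
      rw [hdiff]
      linarith [abs_sub ((cfVal n)⁻¹) ((cfVal m)⁻¹)]
    exact_mod_cast this
  subst hab
  simp only [cfVal, add_right_inj, inv_inj] at h
  exact ⟨rfl, h⟩

theorem cfVal_injOn_even : Set.InjOn cfVal {l | ∀ a ∈ l, a ≠ 0 ∧ Even a} := by
  intro l₁ h₁ l₂ h₂ hv
  have two_le {l : List ℤ} (hl : ∀ a ∈ l, a ≠ 0 ∧ Even a) : ∀ a ∈ l, 2 ≤ |a| :=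
    fun a ha => Int.two_le_abs_of_even (hl a ha).2 (hl a ha).1
  induction l₁ generalizing l₂ with
  | nil =>
    rcases l₂ with _ | ⟨b, n⟩
    · rfl
    · exact absurd hv.symm (cfVal_cons_ne_zero (two_le h₂))
  | cons a m ih =>
    rcases l₂ with _ | ⟨b, n⟩
    · exact absurd hv (cfVal_cons_ne_zero (two_le h₁))
    · have hm : ∀ c ∈ m, c ≠ 0 ∧ Even c := fun c hc => h₁ c (List.mem_cons_of_mem a hc)
      have hn : ∀ c ∈ n, c ≠ 0 ∧ Even c := fun c hc => h₂ c (List.mem_cons_of_mem b hc)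
      obtain ⟨rfl, htail⟩ := eq_and_cfVal_eq_of_cfVal_cons_eq (h₁ a List.mem_cons_self).2
        (h₂ b List.mem_cons_self).2 (two_le hm) (two_le hn) hv
      rw [ih hm hn htail]

theorem even_expansion_unique_general (p q : ℤ)
    (l₁ l₂ : List ℤ)
    (h₁ : ∀ a ∈ l₁, a ≠ 0 ∧ Even a) (hv₁ : cfVal l₁ = (p : ℚ) / q)
    (h₂ : ∀ a ∈ l₂, a ≠ 0 ∧ Even a) (hv₂ : cfVal l₂ = (p : ℚ) / q) :
    l₁ = l₂ :=
  cfVal_injOn_even h₁ h₂ (hv₁.trans hv₂.symm)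

/-- Uniqueness of the even expansion. -/
theorem even_expansion_unique (p q : ℤ) (hp : Odd p) (hq : Even q)
    (h0 : 0 < |q|) (h1 : |q| < p) (hco : IsCoprime p q)
    (l₁ l₂ : List ℤ)
    (h₁ : ∀ a ∈ l₁, a ≠ 0 ∧ Even a) (hv₁ : cfVal l₁ = (p : ℚ) / q)
    (h₂ : ∀ a ∈ l₂, a ≠ 0 ∧ Even a) (hv₂ : cfVal l₂ = (p : ℚ) / q) :
    l₁ = l₂ :=
  even_expansion_unique_general p q l₁ l₂ h₁ hv₁ h₂ hv₂
end

section
/- Let P be an even positive integer and Q an odd positive integer with gcd(P,Q) = 1 and P/3 < Q < P/2. If P/Q = 2 + 1/(α + 1/(β_1 + 1/(... + 1/β_k))) (as a continued fraction with nonzero integer entries), then P/(P-Q) = 2 + 1/(-(α+1) + 1/(-β_1 + 1/(... + 1/(-β_k)))). -/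
lemma cfVal_map_neg (l : List ℤ) : cfVal (l.map (fun b => -b)) = -cfVal l := by
  induction l with
  | nil => simp [cfVal]
  | cons a l ih =>
    simp only [List.map_cons, cfVal, ih, inv_neg, Int.cast_neg]
    ring

lemma cfVal_two_neg_succ_map_neg (α : ℤ) (β : List ℤ) :
    cfVal (2 :: (-(α + 1)) :: β.map (fun b => -b)) = 2 - (α + (cfVal β)⁻¹ + 1)⁻¹ := by
  simp only [cfVal, cfVal_map_neg, Int.cast_neg, Int.cast_add, Int.cast_one, Int.cast_ofNat,
    inv_neg]
  rw [← neg_add, inv_neg, add_right_comm, sub_eq_add_neg]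

lemma two_sub_inv_add_one {K : Type*} [Field K] {x : K} (hx : x ≠ 0) (hx1 : x + 1 ≠ 0) :
    2 - (x + 1)⁻¹ = (2 + x⁻¹) / (2 + x⁻¹ - 1) := by
  have hy : 2 + x⁻¹ - 1 = (x + 1) / x := by field_simp; ring
  rw [hy]
  field_simp
  ring

theorem complement_expansion_large_Q_general (P Q : ℤ) (hQ0 : 0 < Q) (h2 : 2 * Q < P)
    (α : ℤ) (β : List ℤ)
    (h : cfVal (2 :: α :: β) = (P : ℚ) / Q) :
    cfVal (2 :: (-(α + 1)) :: β.map (fun b => -b)) = (P : ℚ) / (P - Q) := by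
  set x : ℚ := α + (cfVal β)⁻¹ with hx
  have hxPQ : 2 + x⁻¹ = (P : ℚ) / Q := h
  have hQ : (0 : ℚ) < Q := by exact_mod_cast hQ0
  have hPQ : (2 : ℚ) < P / Q := by
    rw [lt_div_iff₀ hQ]
    exact_mod_cast h2
  have hx_pos : 0 < x := inv_pos.mp (by linarith)
  rw [cfVal_two_neg_succ_map_neg, ← hx, two_sub_inv_add_one hx_pos.ne' (by positivity), hxPQ]
  field_simp

/-- Case P/3 < Q < P/2: if P/Q = [2, α, β₁, …, β_k] then
P/(P-Q) = [2, -(α+1), -β₁, …, -β_k]. -/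
theorem complement_expansion_large_Q (P Q : ℤ) (hP : Even P) (hP0 : 0 < P)
    (hQ : Odd Q) (hQ0 : 0 < Q) (hco : IsCoprime P Q)
    (h3 : P < 3 * Q) (h2 : 2 * Q < P)
    (α : ℤ) (β : List ℤ) (hα : α ≠ 0) (hβ : ∀ b ∈ β, b ≠ 0)
    (h : cfVal (2 :: α :: β) = (P : ℚ) / Q) :
    cfVal (2 :: (-(α + 1)) :: β.map (fun b => -b)) = (P : ℚ) / (P - Q) :=
  complement_expansion_large_Q_general P Q hQ0 h2 α β h
end

section
/- Let P be an even positive integer and Q an odd positive integer with gcd(P,Q) = 1 and 0 < Q < P/3. If α ≥ 2 is an integer and P/Q = 2α + 1/(β_1 + 1/(... + 1/β_k)) (a continued fraction with nonzero integer entries), then P/(P-Q) = 2 + 1/(-1 + 1/(-(2α-2) + 1/(-β_1 + 1/(... + 1/(-β_k))))). -/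
lemma cfVal_complement (a : ℤ) (l : List ℤ) (h1 : cfVal (a :: l) ≠ 1) (h2 : cfVal (a :: l) ≠ 2) :
    cfVal (2 :: (-1) :: (-(a - 2)) :: l.map (fun b => -b)) =
      cfVal (a :: l) / (cfVal (a :: l) - 1) := by
  set x := cfVal (a :: l) with hx
  have htail : (cfVal l)⁻¹ = x - a := by rw [hx, cfVal]; ring
  have hneg : cfVal ((-(a - 2)) :: l.map (fun b => -b)) = 2 - x := by
    rw [cfVal, cfVal_map_neg, inv_neg, htail]; push_cast; ring
  have h1' : x - 1 ≠ 0 := sub_ne_zero.mpr h1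
  have h2' : 2 - x ≠ 0 := sub_ne_zero.mpr h2.symm
  have hfirst : (-1 : ℚ) + (2 - x)⁻¹ = (x - 1) / (2 - x) := by field_simp; ring
  rw [cfVal, cfVal, hneg]
  push_cast
  rw [hfirst, inv_div]
  field_simp
  ring

theorem complement_expansion_small_Q_general (P Q : ℤ)
    (hQ0 : 0 < Q)
    (h3 : 3 * Q < P)
    (α : ℤ) (β : List ℤ)
    (h : cfVal ((2 * α) :: β) = (P : ℚ) / Q) :
    cfVal (2 :: (-1) :: (-(2 * α - 2)) :: β.map (fun b => -b)) = (P : ℚ) / (P - Q) := by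
  have hQ : (0 : ℚ) < Q := by exact_mod_cast hQ0
  have hx : (3 : ℚ) < P / Q := by
    rw [lt_div_iff₀ hQ]; exact_mod_cast h3
  rw [cfVal_complement (2 * α) β (by linarith) (by linarith), h]
  field_simp

/-- Case 0 < Q < P/3: if P/Q = [2α, β₁, …, β_k] with α ≥ 2 then
P/(P-Q) = [2, -1, -(2α-2), -β₁, …, -β_k]. -/
theorem complement_expansion_small_Q (P Q : ℤ) (hP : Even P) (hP0 : 0 < P)
    (hQ : Odd Q) (hQ0 : 0 < Q) (hco : IsCoprime P Q)
    (h3 : 3 * Q < P)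
    (α : ℤ) (hα : 2 ≤ α) (β : List ℤ) (hβ : ∀ b ∈ β, b ≠ 0)
    (h : cfVal ((2 * α) :: β) = (P : ℚ) / Q) :
    cfVal (2 :: (-1) :: (-(2 * α - 2)) :: β.map (fun b => -b)) = (P : ℚ) / (P - Q) :=
  complement_expansion_small_Q_general P Q hQ0 h3 α β h
end

section
/- For a rational number p/q with p odd, q even, 0 < q < p, gcd(p,q) = 1: if in the division algorithm step p = cq + r with 0 ≤ r < q, then exactly one of c and c+1 is even, and choosing the even one gives a remainder r' with |r'| < q and p/q = (even integer) + r'/q where r'/q has odd numerator or terminates; consequently the greedy even-expansion algorithm terminates. -/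
/-!
Choosing the even one of the quotients `c`, `c + 1` leaves a remainder `r'` with `|r'| < q`,
and `p / q = c' + r' / q` with `c'` even. The pair `(q, r')` is again coprime and of mixed
parity (as `c' q` is even, `q + r' ≡ p + q`), so the step can be repeated on `q / r'` (after a
change of sign if `r' < 0`). Coprimality rules out a zero remainder unless the denominator is
`1`, where the numerator is even and nonzero and the expansion ends; otherwise the denominators
strictly decrease.
-/

def HasEvenExpansion (x : ℚ) : Prop :=
  ∃ l : List ℤ, (∀ a ∈ l, a ≠ 0 ∧ Even a) ∧ cfVal l = x

namespace HasEvenExpansion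

lemma intCast {a : ℤ} (ha : a ≠ 0) (he : Even a) : HasEvenExpansion a :=
  ⟨[a], by simpa using ⟨ha, he⟩, by simp [cfVal]⟩

lemma intCast_add_inv {a : ℤ} (ha : a ≠ 0) (he : Even a) {x : ℚ} (hx : HasEvenExpansion x) :
    HasEvenExpansion (a + x⁻¹) := by
  obtain ⟨l, hl, rfl⟩ := hx
  refine ⟨a :: l, ?_, rfl⟩
  simpa using ⟨⟨ha, he⟩, hl⟩

end HasEvenExpansion

lemma exists_even_quotient {n d c r : ℤ} (hdiv : n = c * d + r) (hr0 : 0 ≤ r) (hr1 : r < d)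
    (hr : r ≠ 0 ∨ Even c) :
    ∃ c' r', Even c' ∧ (c' = c ∨ c' = c + 1) ∧ n = c' * d + r' ∧ |r'| < d := by
  rcases Int.even_or_odd c with hc | hc
  · exact ⟨c, r, hc, Or.inl rfl, hdiv, abs_lt.mpr ⟨by omega, hr1⟩⟩
  · have hr : r ≠ 0 := hr.resolve_right (Int.not_even_iff_odd.mpr hc)
    exact ⟨c + 1, r - d, hc.add_one, Or.inr rfl, by rw [hdiv]; ring,
      abs_lt.mpr ⟨by omega, by omega⟩⟩

lemma eq_one_of_isCoprime_of_dvd {n d : ℤ} (hd : 0 < d) (hco : IsCoprime n d) (h : d ∣ n) :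
    d = 1 := by
  rcases Int.isUnit_iff.mp (hco.isUnit_of_dvd' h dvd_rfl) with h1 | h1 <;> omega

theorem hasEvenExpansion_div (n d : ℤ) (hd : 0 < d) (hlt : d < |n|) (hco : IsCoprime n d)
    (hodd : Odd (n + d)) : HasEvenExpansion (n / d) := by
  rcases eq_or_ne d 1 with rfl | hd1
  · have hn : Even n := by simpa [parity_simps] using hodd
    simpa using HasEvenExpansion.intCast (by rintro rfl; simp at hlt) hn
  have hndvd : ¬d ∣ n := fun h => hd1 (eq_one_of_isCoprime_of_dvd hd hco h)
  obtain ⟨c', r', hc', -, hn, hr'⟩ := exists_even_quotient (Int.ediv_mul_add_emod n d).symm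
    (Int.emod_nonneg n hd.ne') (Int.emod_lt_of_pos n hd)
    (Or.inl fun h => hndvd (Int.dvd_of_emod_eq_zero h))
  have hr'0 : r' ≠ 0 := by rintro rfl; exact hndvd ⟨c', by rw [hn]; ring⟩
  have hc'0 : c' ≠ 0 := by rintro rfl; rw [hn, zero_mul, zero_add] at hlt; exact hr'.not_gt hlt
  have hco' : IsCoprime d r' := by
    have h := hco.symm.add_mul_left_right (-c')
    rwa [show n + d * -c' = r' by rw [hn]; ring] at h
  have hodd' : Odd (d + r') := by
    simpa [show n + d - c' * d = d + r' by rw [hn]; ring] using hodd.sub_even (hc'.mul_right d)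
  have hr'bound := abs_lt.mp hr'
  have hrec : HasEvenExpansion (d / r') := by
    rcases hr'0.lt_or_gt with hneg | hpos
    · have := hasEvenExpansion_div (-d) (-r') (by omega) (by rw [abs_neg, abs_of_pos hd]; omega)
        hco'.neg_neg (by rw [← neg_add]; exact hodd'.neg)
      simpa [neg_div_neg_eq] using this
    · exact hasEvenExpansion_div d r' hpos (by rw [abs_of_pos hd]; omega) hco' hodd'
  convert hrec.intCast_add_inv hc'0 hc' using 1
  have hdQ : (d : ℚ) ≠ 0 := by exact_mod_cast hd.ne'
  rw [inv_div, hn]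
  push_cast
  field_simp
termination_by d.toNat
decreasing_by all_goals omega

/-- One step of the greedy even expansion: exactly one of the quotients c, c+1 is even,
the even choice gives an odd remainder r' with |r'| < q, and consequently the greedy
even-expansion algorithm terminates, producing a finite even expansion of p/q. -/
theorem even_expansion_step_and_termination (p q c r : ℤ)
    (hp : Odd p) (hq : Even q) (h0 : 0 < q) (h1 : q < p) (hco : IsCoprime p q)
    (hdiv : p = c * q + r) (hr0 : 0 ≤ r) (hr1 : r < q) :
    Xor' (Even c) (Even (c + 1)) ∧
    (∃ c' r' : ℤ, Even c' ∧ (c' = c ∨ c' = c + 1) ∧ p = c' * q + r' ∧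
      |r'| < q ∧ Odd r') ∧
    (∃ l : List ℤ, (∀ a ∈ l, a ≠ 0 ∧ Even a) ∧ cfVal l = (p : ℚ) / q) := by
  have hr : r ≠ 0 := by
    rintro rfl
    exact Int.not_even_iff_odd.mpr hp (by simpa [hdiv] using hq.mul_left c)
  obtain ⟨c', r', hc', hcc', hpr', hr'⟩ := exists_even_quotient hdiv hr0 hr1 (Or.inl hr)
  have hr'odd : Odd r' := by
    simpa [show p - c' * q = r' by rw [hpr']; ring] using hp.sub_even (hc'.mul_right q)
  exact ⟨xor_iff_not_iff'.mpr Int.even_add_one.symm, ⟨c', r', hc', hcc', hpr', hr', hr'odd⟩,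
    hasEvenExpansion_div p q h0 (by rwa [abs_of_pos (by omega)]) hco (hp.add_even hq)⟩
end

section
/- If [a_1, ..., a_{2n}] is a continued fraction with all entries nonzero even integers, then its value p/q (in lowest terms) satisfies: p is odd and q is even. -/
theorem Rat.intCast_add_num (n : ℤ) (q : ℚ) : ((n : ℚ) + q).num = n * q.den + q.num := by
  have h := Rat.mul_den_eq_num ((n : ℚ) + q)
  rw [Rat.intCast_add_den, add_mul, Rat.mul_den_eq_num] at h
  exact_mod_cast h.symm

theorem Int.two_le_abs_of_even_s16 {b : ℤ} (hb : Even b) (h0 : b ≠ 0) : 2 ≤ |b| := by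
  obtain ⟨k, rfl⟩ := hb
  rw [le_abs]
  omega

theorem one_lt_abs_add_inv {K : Type*} [Field K] [LinearOrder K] [IsStrictOrderedRing K]
    {a y : K} (ha : 2 ≤ |a|) (hy : 1 < |y|) : 1 < |a + y⁻¹| := by
  have hinv : |y⁻¹| < 1 := by
    rw [abs_inv]
    exact inv_lt_one_of_one_lt₀ hy
  have := abs_sub_abs_le_abs_sub a (-y⁻¹)
  rw [abs_neg, sub_neg_eq_add] at this
  linarith

theorem odd_num_intCast_add_inv_iff {a : ℤ} (ha : Even a) {x : ℚ} (hx : x ≠ 0) :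
    Odd ((a : ℚ) + x⁻¹).num ↔ Odd x.den := by
  have hsign : Odd x.num.sign := by
    rw [← Int.natAbs_odd, Int.natAbs_sign_of_ne_zero (Rat.num_ne_zero.mpr hx)]
    exact odd_one
  rw [Rat.intCast_add_num, Rat.num_inv, Int.odd_add', Int.odd_mul,
    iff_true_intro (ha.mul_right _), iff_true, and_iff_right hsign, Int.odd_coe_nat]

theorem even_den_intCast_add_inv_iff (a : ℤ) {x : ℚ} (hx : x ≠ 0) :
    Even ((a : ℚ) + x⁻¹).den ↔ Even x.num := by
  rw [Rat.intCast_add_den, Rat.den_inv_of_ne_zero hx, Int.natAbs_even]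

theorem one_lt_abs_cfVal_cons_s16 (a : ℤ) (t : List ℤ) (h : ∀ b ∈ a :: t, 2 ≤ |b|) :
    1 < |cfVal (a :: t)| := by
  induction t generalizing a with
  | nil =>
    have ha : (2 : ℚ) ≤ |(a : ℚ)| := mod_cast h a List.mem_cons_self
    simp only [cfVal, inv_zero, add_zero]
    linarith
  | cons b t ih =>
    have ha : (2 : ℚ) ≤ |(a : ℚ)| := mod_cast h a List.mem_cons_self
    exact one_lt_abs_add_inv ha (ih b fun c hc => h c (List.mem_cons_of_mem a hc))

theorem parity_cfVal_cons (a : ℤ) (t : List ℤ) (h : ∀ b ∈ a :: t, b ≠ 0 ∧ Even b) :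
    (Odd (cfVal (a :: t)).num ↔ Even (a :: t).length) ∧
      (Even (cfVal (a :: t)).den ↔ Even (a :: t).length) := by
  induction t generalizing a with
  | nil =>
    have ha : Even a := (h a List.mem_cons_self).2
    simp [cfVal, ha]
  | cons b t ih =>
    have ha : Even a := (h a List.mem_cons_self).2
    have htail : ∀ c ∈ b :: t, c ≠ 0 ∧ Even c := fun c hc => h c (List.mem_cons_of_mem a hc)
    have hx : cfVal (b :: t) ≠ 0 := abs_pos.mp <| one_pos.trans <|
      one_lt_abs_cfVal_cons_s16 b t fun c hc => Int.two_le_abs_of_even_s16 (htail c hc).2 (htail c hc).1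
    obtain ⟨hnum, hden⟩ := ih b htail
    rw [List.length_cons, Nat.even_add_one]
    exact ⟨(odd_num_intCast_add_inv_iff ha hx).trans (by rw [← Nat.not_even_iff_odd, hden]),
      (even_den_intCast_add_inv_iff a hx).trans (by rw [← Int.not_odd_iff_even, hnum])⟩

/-- A nonempty continued fraction with all entries nonzero even integers and an even
number of entries has value p/q in lowest terms with p odd and q even. -/
theorem even_cf_value_odd_over_even (l : List ℤ) (hne : l ≠ [])
    (hl : ∀ a ∈ l, a ≠ 0 ∧ Even a) (hlen : Even l.length) :
    Odd (cfVal l).num ∧ Even (cfVal l).den := by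
  obtain ⟨a, t, rfl⟩ := List.exists_cons_of_ne_nil hne
  obtain ⟨hnum, hden⟩ := parity_cfVal_cons a t hl
  exact ⟨hnum.mpr hlen, hden.mpr hlen⟩
end
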